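/- Suppose the subspaces S_1, ..., S_n are independent, i.e., dim(S_1 + ... + S_n) = dim(S_1) + ... + dim(S_n). Then for every data point x_j ∈ S_i, the representation c* produced by OMP(X_{-j}, x_j) with termination parameters ε = 0 and k_max = N − 1 is subspace preserving: for every m, c*_m ≠ 0 implies x_m ∈ S_i. -/

import Mathlib

/-!
With `ε = 0`, every OMP step selects an atom outside the span of the atoms selected so far: the
residual is orthogonal to that span, yet it lies in the span of all atoms (because `x j` does) and
so correlates with the greedily chosen one. Hence the selected atoms are linearly independent and,
after `N - 1` steps, span `x j`, so the output `c` represents `x j` exactly. The part of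
`∑ c m • x m` coming from points outside `S i` then lies in `S i ∩ ∑_{k ≠ i} S k = 0`, and linear
independence of the selected atoms forces its coefficients to vanish.
-/

open scoped RealInnerProductSpace Classical

noncomputable section

namespace SSCOMP

variable {D : ℕ}

noncomputable def ompSelect {ι : Type*} [Fintype ι] [LinearOrder ι] [Nonempty ι]
    (a : ι → EuclideanSpace ℝ (Fin D)) (q : EuclideanSpace ℝ (Fin D)) : ι :=
  (Finset.univ.filter fun i => ∀ m, |⟪a m, q⟫| ≤ |⟪a i, q⟫|).min' (by
    obtain ⟨i, -, hi⟩ := Finset.exists_max_image (Finset.univ : Finset ι)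
      (fun m => |⟪a m, q⟫|) Finset.univ_nonempty
    exact ⟨i, Finset.mem_filter.mpr ⟨Finset.mem_univ i, fun m => hi m (Finset.mem_univ m)⟩⟩)

noncomputable def ompState {ι : Type*} [Fintype ι] [LinearOrder ι]
    (a : ι → EuclideanSpace ℝ (Fin D)) (b : EuclideanSpace ℝ (Fin D)) :
    ℕ → Finset ι × EuclideanSpace ℝ (Fin D)
  | 0 => (∅, b)
  | k + 1 =>
    let s := ompState a b k
    if s.2 = 0 then s
    else if h : Nonempty ι then
      haveI := h
      let T' : Finset ι := insert (ompSelect a s.2) s.1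
      (T', b - (Submodule.orthogonalProjectionOnto (Submodule.span ℝ (a '' (T' : Set ι))) b :
        EuclideanSpace ℝ (Fin D)))
    else s

noncomputable def ompSupport {ι : Type*} [Fintype ι] [LinearOrder ι]
    (a : ι → EuclideanSpace ℝ (Fin D)) (b : EuclideanSpace ℝ (Fin D)) (k : ℕ) : Finset ι :=
  (ompState a b k).1

noncomputable def ompResidual {ι : Type*} [Fintype ι] [LinearOrder ι]
    (a : ι → EuclideanSpace ℝ (Fin D)) (b : EuclideanSpace ℝ (Fin D)) (k : ℕ) :
    EuclideanSpace ℝ (Fin D) :=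
  (ompState a b k).2

def IsOMPOutput {ι : Type*} [Fintype ι] [LinearOrder ι]
    (a : ι → EuclideanSpace ℝ (Fin D)) (b : EuclideanSpace ℝ (Fin D)) (kmax : ℕ)
    (c : ι → ℝ) : Prop :=
  (∀ m, c m ≠ 0 → m ∈ ompSupport a b kmax) ∧
  ∀ c' : ι → ℝ, (∀ m, c' m ≠ 0 → m ∈ ompSupport a b kmax) →
    ‖b - ∑ m, c m • a m‖ ≤ ‖b - ∑ m, c' m • a m‖

/-- Set of normalized nonzero residual directions of OMP(a, b) run with `ε = 0`
and `k_max` large enough. -/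
noncomputable def residualDirs {ι : Type*} [Fintype ι] [LinearOrder ι]
    (a : ι → EuclideanSpace ℝ (Fin D)) (b : EuclideanSpace ℝ (Fin D)) :
    Set (EuclideanSpace ℝ (Fin D)) :=
  {w | ∃ k, ompResidual a b k ≠ 0 ∧ w = ‖ompResidual a b k‖⁻¹ • ompResidual a b k}

/-- Coherence between two sets of unit-norm points. -/
noncomputable def coherence (A B : Set (EuclideanSpace ℝ (Fin D))) : ℝ :=
  sSup {r : ℝ | ∃ u ∈ A, ∃ v ∈ B, r = |⟪u, v⟫|}

/-- Symmetrized convex hull `conv(±A)`. -/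
noncomputable def symmHull (A : Set (EuclideanSpace ℝ (Fin D))) :
    Set (EuclideanSpace ℝ (Fin D)) :=
  convexHull ℝ (A ∪ (-A))

/-- Inradius of a convex body: the radius of the largest Euclidean ball
(within the linear span of the body) inscribed in it. -/
noncomputable def inradius (P : Set (EuclideanSpace ℝ (Fin D))) : ℝ :=
  sSup {r : ℝ | 0 ≤ r ∧ ∃ c ∈ Submodule.span ℝ P,
    ∀ y ∈ Submodule.span ℝ P, ‖y - c‖ ≤ r → y ∈ P}

variable {n N : ℕ}

/-- `X^i`: the set of data points lying in the `i`-th subspace. -/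
noncomputable def subX (S : Fin n → Submodule ℝ (EuclideanSpace ℝ (Fin D)))
    (x : Fin N → EuclideanSpace ℝ (Fin D)) (i : Fin n) : Set (EuclideanSpace ℝ (Fin D)) :=
  x '' {m | x m ∈ S i}

/-- `X^i_{-j}`: the set of data points lying in the `i`-th subspace, with `x j` removed. -/
noncomputable def subXmin (S : Fin n → Submodule ℝ (EuclideanSpace ℝ (Fin D)))
    (x : Fin N → EuclideanSpace ℝ (Fin D)) (i : Fin n) (j : Fin N) :
    Set (EuclideanSpace ℝ (Fin D)) :=
  x '' {m | x m ∈ S i ∧ m ≠ j}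

/-- `W_j^i`: the set of OMP residual directions associated with `X^i_{-j}` and `x j`. -/
noncomputable def Wji (S : Fin n → Submodule ℝ (EuclideanSpace ℝ (Fin D)))
    (x : Fin N → EuclideanSpace ℝ (Fin D)) (i : Fin n) (j : Fin N) :
    Set (EuclideanSpace ℝ (Fin D)) :=
  residualDirs (fun m : {m : Fin N // x m ∈ S i ∧ m ≠ j} => x m.1) (x j)

/-- `W^i`: the set of OMP residual directions associated with `X^i`. -/
noncomputable def Wfull (S : Fin n → Submodule ℝ (EuclideanSpace ℝ (Fin D)))
    (x : Fin N → EuclideanSpace ℝ (Fin D)) (i : Fin n) : Set (EuclideanSpace ℝ (Fin D)) :=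
  ⋃ j ∈ {j : Fin N | x j ∈ S i}, Wji S x i j

/-- `r_i := min_{j : x_j ∈ S_i} r(P^i_{-j})`. -/
noncomputable def rMin (S : Fin n → Submodule ℝ (EuclideanSpace ℝ (Fin D)))
    (x : Fin N → EuclideanSpace ℝ (Fin D)) (i : Fin n) : ℝ :=
  sInf {r : ℝ | ∃ j, x j ∈ S i ∧ r = inradius (symmHull (subXmin S x i j))}

/-- Cosine of the principal angle between two subspaces. -/
noncomputable def cosAngle (Si Sk : Submodule ℝ (EuclideanSpace ℝ (Fin D))) : ℝ :=
  sSup {r : ℝ | ∃ u ∈ Si, ∃ v ∈ Sk, ‖u‖ = 1 ∧ ‖v‖ = 1 ∧ r = ⟪u, v⟫}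

end SSCOMP

section LinearAlgebra

lemma eq_zero_of_mem_span_of_inner_eq_zero {𝕜 E : Type*} [RCLike 𝕜] [NormedAddCommGroup E]
    [InnerProductSpace 𝕜 E] {s : Set E} {r : E} (hr : r ∈ Submodule.span 𝕜 s)
    (h : ∀ u ∈ s, inner 𝕜 u r = 0) : r = 0 := by
  have hspan : ∀ u ∈ Submodule.span 𝕜 s, inner 𝕜 u r = 0 := fun u hu => by
    induction hu using Submodule.span_induction with
    | mem v hv => exact h v hv
    | zero => exact inner_zero_left r
    | add u v _ _ hu hv => rw [inner_add_left, hu, hv, add_zero]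
    | smul c u _ hu => rw [inner_smul_left, hu, mul_zero]
  exact inner_self_eq_zero.mp (hspan r hr)

variable {K V ι : Type*} [Field K] [AddCommGroup V] [Module K V]

lemma LinearIndepOn.eq_zero_of_sum_smul_eq_zero [Fintype ι] {v : ι → V} {s : Set ι}
    (hv : LinearIndepOn K v s) {g : ι → K} (hg : ∀ m, g m ≠ 0 → m ∈ s)
    (hsum : ∑ m, g m • v m = 0) (m : ι) : g m = 0 := by
  have hl := linearIndepOn_iff.mp hv (Finsupp.equivFunOnFinite.symm g)
    (fun m hm => hg m (Finsupp.mem_support_iff.mp hm)) (by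
      rw [Finsupp.linearCombination_apply, Finsupp.sum_fintype _ _ (by simp)]
      exact hsum)
  simpa using DFunLike.congr_fun hl m

lemma LinearIndepOn.mem_of_sum_smul_mem [Fintype ι] {v : ι → V} {s : Set ι}
    (hv : LinearIndepOn K v s) {P Q : Submodule K V} (hPQ : Disjoint P Q)
    (hvPQ : ∀ m, v m ∈ P ∨ v m ∈ Q)
    {c : ι → K} (hc : ∀ m, c m ≠ 0 → m ∈ s) (hsum : ∑ m, c m • v m ∈ P)
    {m : ι} (hm : c m ≠ 0) : v m ∈ P := by
  set g : ι → K := fun m => if v m ∈ P then 0 else c m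
  have hgP : ∑ m, g m • v m ∈ P := by
    have hsplit : ∑ m, g m • v m = ∑ m, c m • v m - ∑ m, (if v m ∈ P then c m else 0) • v m := by
      rw [← Finset.sum_sub_distrib]
      refine Finset.sum_congr rfl fun m _ => ?_
      by_cases h : v m ∈ P <;> simp [g, h]
    rw [hsplit]
    exact P.sub_mem hsum (P.sum_mem fun m _ => by
      by_cases h : v m ∈ P <;> simp [h, P.smul_mem])
  have hgQ : ∑ m, g m • v m ∈ Q := Q.sum_mem fun m _ => by
    by_cases h : v m ∈ P
    · simp [g, h]
    · simpa [g, h] using Q.smul_mem (c m) ((hvPQ m).resolve_left h)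
  have hg0 := hv.eq_zero_of_sum_smul_eq_zero (g := g)
    (fun m hgm => hc m fun hcm => hgm (by simp [g, hcm]))
    (Submodule.disjoint_def.mp hPQ _ hgP hgQ) m
  by_contra h
  exact hm (by simpa [g, h] using hg0)

lemma Submodule.finrank_finset_sup_le_sum [FiniteDimensional K V] (S : ι → Submodule K V)
    (t : Finset ι) : Module.finrank K ↥(t.sup S) ≤ ∑ k ∈ t, Module.finrank K (S k) := by
  induction t using Finset.induction with
  | empty => simp
  | @insert i t hi ih =>
    rw [Finset.sup_insert, Finset.sum_insert hi]
    have h := Submodule.finrank_sup_add_finrank_inf_eq (S i) (t.sup S)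
    omega

lemma Submodule.iSupIndep_of_finrank_iSup_eq_sum [Fintype ι] [FiniteDimensional K V]
    (S : ι → Submodule K V) (h : Module.finrank K ↥(⨆ i, S i) = ∑ i, Module.finrank K ↥(S i)) :
    iSupIndep S := by
  intro i
  have hsup : (⨆ k, ⨆ (_ : k ≠ i), S k) = (Finset.univ.erase i).sup S := by
    simp [Finset.sup_eq_iSup]
  have hall : (⨆ k, S k) = S i ⊔ (Finset.univ.erase i).sup S := by
    rw [← Finset.sup_univ_eq_iSup, ← Finset.sup_insert, Finset.insert_erase (Finset.mem_univ i)]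
  have hinter := Submodule.finrank_sup_add_finrank_inf_eq (S i) ((Finset.univ.erase i).sup S)
  have hle := finrank_finset_sup_le_sum S (Finset.univ.erase i)
  rw [← Finset.add_sum_erase _ _ (Finset.mem_univ i), hall] at h
  rw [hsup, disjoint_iff, ← Submodule.finrank_eq_zero]
  omega

end LinearAlgebra

namespace SSCOMP

section OMP

variable {ι : Type*} [Fintype ι] [LinearOrder ι]
  (a : ι → EuclideanSpace ℝ (Fin D)) (b : EuclideanSpace ℝ (Fin D))

lemma ompState_succ_of_ompResidual_eq_zero {k : ℕ} (hk : ompResidual a b k = 0) :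
    ompState a b (k + 1) = ompState a b k := by
  have hk' : (ompState a b k).2 = 0 := hk
  rw [ompState, if_pos hk']

variable [Nonempty ι]

lemma abs_inner_le_abs_inner_ompSelect (q : EuclideanSpace ℝ (Fin D)) (m : ι) :
    |⟪a m, q⟫| ≤ |⟪a (ompSelect a q), q⟫| := by
  unfold ompSelect
  apply (Finset.mem_filter.mp (Finset.min'_mem (Finset.univ.filter fun i =>
    ∀ m, |⟪a m, q⟫| ≤ |⟪a i, q⟫|) _)).2

lemma ompState_succ {k : ℕ} (hk : ompResidual a b k ≠ 0) :
    ompState a b (k + 1) =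
      (insert (ompSelect a (ompResidual a b k)) (ompSupport a b k),
        b - (Submodule.span ℝ (a '' (insert (ompSelect a (ompResidual a b k))
          (ompSupport a b k) : Finset ι))).starProjection b) := by
  have hk' : (ompState a b k).2 ≠ 0 := hk
  rw [ompState, if_neg hk', dif_pos ‹_›]; rfl

lemma ompSupport_succ {k : ℕ} (hk : ompResidual a b k ≠ 0) :
    ompSupport a b (k + 1) = insert (ompSelect a (ompResidual a b k)) (ompSupport a b k) := by
  rw [ompSupport, ompState_succ a b hk]

lemma ompResidual_eq_sub_starProjection (k : ℕ) :
    ompResidual a b k =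
      b - (Submodule.span ℝ (a '' (ompSupport a b k : Set ι))).starProjection b := by
  induction k with
  | zero => simp [ompResidual, ompSupport, ompState]
  | succ k ih =>
    by_cases hk : ompResidual a b k = 0
    · rwa [ompResidual, ompSupport, ompState_succ_of_ompResidual_eq_zero a b hk]
    · rw [ompResidual, ompSupport, ompState_succ a b hk]

lemma ompResidual_mem_orthogonal (k : ℕ) :
    ompResidual a b k ∈ (Submodule.span ℝ (a '' (ompSupport a b k : Set ι)))ᗮ := by
  rw [ompResidual_eq_sub_starProjection]
  exact Submodule.sub_starProjection_mem_orthogonal b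

variable {a b}

lemma ompResidual_mem_span (hb : b ∈ Submodule.span ℝ (Set.range a)) (k : ℕ) :
    ompResidual a b k ∈ Submodule.span ℝ (Set.range a) := by
  rw [ompResidual_eq_sub_starProjection]
  exact Submodule.sub_mem _ hb
    (Submodule.span_mono (Set.image_subset_range a _) (Submodule.starProjection_apply_mem _ b))

/-- A nonzero residual lies in the span of the atoms, so it correlates with some atom, and hence
with the greedily selected one. -/
lemma inner_ompSelect_ompResidual_ne_zero (hb : b ∈ Submodule.span ℝ (Set.range a))
    {k : ℕ} (hk : ompResidual a b k ≠ 0) :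
    ⟪a (ompSelect a (ompResidual a b k)), ompResidual a b k⟫ ≠ 0 := by
  intro h0
  refine hk (eq_zero_of_mem_span_of_inner_eq_zero (ompResidual_mem_span hb k) ?_)
  rintro _ ⟨m, rfl⟩
  simpa [h0] using abs_inner_le_abs_inner_ompSelect a (ompResidual a b k) m

lemma ompSelect_notMem_span (hb : b ∈ Submodule.span ℝ (Set.range a))
    {k : ℕ} (hk : ompResidual a b k ≠ 0) :
    a (ompSelect a (ompResidual a b k)) ∉ Submodule.span ℝ (a '' (ompSupport a b k : Set ι)) :=
  fun hmem => inner_ompSelect_ompResidual_ne_zero hb hk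
    (Submodule.inner_right_of_mem_orthogonal hmem (ompResidual_mem_orthogonal a b k))

lemma linearIndepOn_ompSupport (hb : b ∈ Submodule.span ℝ (Set.range a)) (k : ℕ) :
    LinearIndepOn ℝ a (ompSupport a b k : Set ι) := by
  induction k with
  | zero => simp [ompSupport, ompState]
  | succ k ih =>
    by_cases hk : ompResidual a b k = 0
    · rwa [ompSupport, ompState_succ_of_ompResidual_eq_zero a b hk]
    · rw [ompSupport_succ a b hk, Finset.coe_insert]
      exact ih.insert (ompSelect_notMem_span hb hk)

lemma card_ompSupport (hb : b ∈ Submodule.span ℝ (Set.range a)) {k : ℕ}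
    (hk : ompResidual a b k ≠ 0) : (ompSupport a b k).card = k := by
  induction k with
  | zero => rfl
  | succ k ih =>
    have hk' : ompResidual a b k ≠ 0 := fun h => hk (by
      rw [ompResidual, ompState_succ_of_ompResidual_eq_zero a b h]; exact h)
    rw [ompSupport_succ a b hk', Finset.card_insert_of_notMem, ih hk']
    exact fun hmem => ompSelect_notMem_span hb hk'
      (Submodule.subset_span (Set.mem_image_of_mem a hmem))

/-- Each nonzero residual adds a new atom, so after `card ι` steps with a nonzero residual every
atom would be selected and the residual would be orthogonal to its own span. -/
lemma ompResidual_card_eq_zero (hb : b ∈ Submodule.span ℝ (Set.range a)) :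
    ompResidual a b (Fintype.card ι) = 0 := by
  by_contra hk
  have huniv : ompSupport a b (Fintype.card ι) = Finset.univ :=
    Finset.eq_univ_of_card _ (card_ompSupport hb hk)
  have horth := ompResidual_mem_orthogonal a b (Fintype.card ι)
  rw [huniv, Finset.coe_univ, Set.image_univ] at horth
  exact hk (eq_zero_of_mem_span_of_inner_eq_zero (ompResidual_mem_span hb _)
    fun u hu => Submodule.inner_right_of_mem_orthogonal (Submodule.subset_span hu) horth)

lemma mem_span_ompSupport_card (hb : b ∈ Submodule.span ℝ (Set.range a)) :
    b ∈ Submodule.span ℝ (a '' (ompSupport a b (Fintype.card ι) : Set ι)) := by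
  have h := ompResidual_eq_sub_starProjection a b (Fintype.card ι)
  rw [ompResidual_card_eq_zero hb, eq_comm, sub_eq_zero] at h
  exact Submodule.starProjection_eq_self_iff.mp h.symm

omit [Nonempty ι] in
lemma IsOMPOutput.sum_smul_eq {kmax : ℕ} {c : ι → ℝ} (hc : IsOMPOutput a b kmax c)
    (hb : b ∈ Submodule.span ℝ (a '' (ompSupport a b kmax : Set ι))) :
    ∑ m, c m • a m = b := by
  obtain ⟨l, hl, hlb⟩ := (Finsupp.mem_span_image_iff_linearCombination ℝ).mp hb
  rw [Finsupp.linearCombination_apply, Finsupp.sum_fintype _ _ (by simp)] at hlb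
  have hopt := hc.2 l fun m hm =>
    (Finsupp.mem_supported ℝ l).mp hl (Finsupp.mem_support_iff.mpr hm)
  rw [hlb, sub_self, norm_zero] at hopt
  exact (sub_eq_zero.mp (norm_le_zero_iff.mp hopt)).symm

end OMP

theorem sscOmp_independent_subspacePreserving_general
    {D n N : ℕ} (S : Fin n → Submodule ℝ (EuclideanSpace ℝ (Fin D)))
    (x : Fin N → EuclideanSpace ℝ (Fin D))
    (hmem : ∀ j, ∃ i, x j ∈ S i)
    (hrank : ∀ i, ∀ j, x j ∈ S i → Submodule.span ℝ (subXmin S x i j) = S i)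
    (hindep : Module.finrank ℝ ↥(⨆ i, S i) = ∑ i, Module.finrank ℝ ↥(S i))
    (i : Fin n) (j : Fin N) (hj : x j ∈ S i)
    (c : {m : Fin N // m ≠ j} → ℝ)
    (hc : IsOMPOutput (fun m => x m.1) (x j) (N - 1) c) :
    ∀ m : {m : Fin N // m ≠ j}, c m ≠ 0 → x m.1 ∈ S i := by
  intro m hm
  have : Nonempty {m : Fin N // m ≠ j} := ⟨m⟩
  have hspan : x j ∈ Submodule.span ℝ (Set.range fun m : {m : Fin N // m ≠ j} => x m.1) := by
    refine Submodule.span_mono ?_ (hrank i j hj ▸ hj)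
    rintro _ ⟨m, ⟨-, hmj⟩, rfl⟩
    exact ⟨⟨m, hmj⟩, rfl⟩
  have hcard : Fintype.card {m : Fin N // m ≠ j} = N - 1 := by
    simp [Fintype.card_subtype_compl]
  have hsum : ∑ m, c m • x m.1 = x j :=
    hc.sum_smul_eq (hcard ▸ mem_span_ompSupport_card hspan)
  have hsplit : ∀ m : {m : Fin N // m ≠ j}, x m.1 ∈ S i ∨ x m.1 ∈ ⨆ (k) (_ : k ≠ i), S k := by
    intro m
    obtain ⟨k, hk⟩ := hmem m.1
    rcases eq_or_ne k i with rfl | hki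
    · exact Or.inl hk
    · exact Or.inr (le_iSup₂ (f := fun k (_ : k ≠ i) => S k) k hki hk)
  exact (linearIndepOn_ompSupport hspan (N - 1)).mem_of_sum_smul_mem
    ((Submodule.iSupIndep_of_finrank_iSup_eq_sum S hindep) i) hsplit hc.1 (hsum ▸ hj) hm

/-- If the subspaces `S 1, ..., S n` are independent, then for every data
point `x j ∈ S i`, the representation `c` produced by `OMP(X₋ⱼ, x j)` with `ε = 0` and
`k_max = N - 1` is subspace preserving: `c m ≠ 0` implies `x m ∈ S i`. -/
theorem sscOmp_independent_subspacePreserving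
    {D n N : ℕ} (S : Fin n → Submodule ℝ (EuclideanSpace ℝ (Fin D)))
    (x : Fin N → EuclideanSpace ℝ (Fin D))
    (hunit : ∀ j, ‖x j‖ = 1)
    (hmem : ∀ j, ∃ i, x j ∈ S i)
    (hrank : ∀ i, ∀ j, x j ∈ S i → Submodule.span ℝ (subXmin S x i j) = S i)
    (hindep : Module.finrank ℝ ↥(⨆ i, S i) = ∑ i, Module.finrank ℝ ↥(S i))
    (i : Fin n) (j : Fin N) (hj : x j ∈ S i)
    (c : {m : Fin N // m ≠ j} → ℝ)
    (hc : IsOMPOutput (fun m => x m.1) (x j) (N - 1) c) :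
    ∀ m : {m : Fin N // m ≠ j}, c m ≠ 0 → x m.1 ∈ S i :=
  sscOmp_independent_subspacePreserving_general S x hmem hrank hindep i j hj c hc

end SSCOMP
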